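/- arXiv:2509.15145 — 4 statements merged into one kernel-verified Lean document; each statement's English description precedes it below -/
import Mathlib

section
/- Unbiasedness of the bag-level estimator: let (x₁,y₁),…,(x_k,y_k) be i.i.d. samples from a distribution D on X × {0,1}, let p = E[y], α = (1/k)∑ᵢ yᵢ, and for f₁, f₂ : ℝ → ℝ and h : X → ℝ define ℓ_b = E_x[f₁(h(x)) + p·f₂(h(x))] + (α − p)·(∑ᵢ₌₁ᵏ f₂(h(xᵢ)) − k·E_x[f₂(h(x))]). Then E[ℓ_b] = E_{(x,y)}[f₁(h(x)) + y·f₂(h(x))]. -/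
/-!
The bag proportion `α` has mean `p` and `∑ᵢ f₂(h xᵢ)` has mean `k E[f₂(h x)]`, so the
correction term of the estimator has expectation `Cov(α, ∑ᵢ f₂(h xᵢ))`. By independence only
the `k` diagonal pairs of samples contribute, so this covariance is
`Cov(y, f₂(h x)) = E[y f₂(h x)] - p E[f₂(h x)]`, which turns `E[f₁(h x) + p f₂(h x)]` into
`E[f₁(h x) + y f₂(h x)]`.
-/

open MeasureTheory ProbabilityTheory

section IIDSample

variable {Ω ι : Type*} {mΩ : MeasurableSpace Ω} {μ : Measure Ω} [IsProbabilityMeasure μ]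
  [Fintype ι] {X Y : Ω → ℝ}

lemma memLp_comp_eval_pi {p : ENNReal} (hX : MemLp X p μ) (i : ι) :
    MemLp (fun ω : ι → Ω => X (ω i)) p (Measure.pi fun _ => μ) :=
  hX.comp_measurePreserving (measurePreserving_eval _ i)

lemma memLp_sum_comp_eval_pi {p : ENNReal} (hX : MemLp X p μ) :
    MemLp (fun ω : ι → Ω => ∑ i, X (ω i)) p (Measure.pi fun _ => μ) :=
  memLp_finsetSum Finset.univ fun i _ => memLp_comp_eval_pi hX i

lemma integral_sum_comp_eval_pi (hX : Integrable X μ) :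
    ∫ ω, ∑ i, X (ω i) ∂(Measure.pi fun _ : ι => μ) = Fintype.card ι * ∫ x, X x ∂μ := by
  rw [integral_finsetSum _ fun i _ => integrable_comp_eval hX]
  simp [integral_comp_eval (μ := fun _ : ι => μ) hX.aestronglyMeasurable]

lemma covariance_comp_eval_pi (i : ι) (hX : AEStronglyMeasurable X μ)
    (hY : AEStronglyMeasurable Y μ) :
    cov[fun ω => X (ω i), fun ω => Y (ω i); Measure.pi fun _ => μ] = cov[X, Y; μ] := by
  have hmap := (measurePreserving_eval (fun _ : ι => μ) i).map_eq
  rw [← covariance_map_fun (by rwa [hmap]) (by rwa [hmap]) (measurable_pi_apply i).aemeasurable]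
  exact congrArg _ hmap

lemma covariance_comp_eval_pi_of_ne {i j : ι} (hij : i ≠ j) (hX : MemLp X 2 μ)
    (hY : MemLp Y 2 μ) :
    cov[fun ω => X (ω i), fun ω => Y (ω j); Measure.pi fun _ => μ] = 0 := by
  have hindep : (fun ω : ι → Ω => ω i) ⟂ᵢ[Measure.pi fun _ => μ] (fun ω => ω j) :=
    (iIndepFun_pi (X := fun _ => id) fun _ => aemeasurable_id).indepFun hij
  have hmap : ∀ l, (Measure.pi fun _ : ι => μ).map (fun ω => ω l) = μ :=
    fun l => (measurePreserving_eval _ l).map_eq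
  refine IndepFun.covariance_eq_zero ?_ (memLp_comp_eval_pi hX i) (memLp_comp_eval_pi hY j)
  exact hindep.comp₀ (measurable_pi_apply i).aemeasurable (measurable_pi_apply j).aemeasurable
    (by rw [hmap]; exact hX.aestronglyMeasurable.aemeasurable)
    (by rw [hmap]; exact hY.aestronglyMeasurable.aemeasurable)

lemma covariance_sum_comp_eval_pi (hX : MemLp X 2 μ) (hY : MemLp Y 2 μ) :
    cov[fun ω : ι → Ω => ∑ i, X (ω i), fun ω => ∑ j, Y (ω j); Measure.pi fun _ => μ]
      = Fintype.card ι * cov[X, Y; μ] := by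
  classical
  rw [covariance_fun_sum_fun_sum (memLp_comp_eval_pi hX) (memLp_comp_eval_pi hY)]
  have hterm : ∀ i j : ι, cov[fun ω => X (ω i), fun ω => Y (ω j); Measure.pi fun _ => μ]
      = if i = j then cov[X, Y; μ] else 0 := by
    intro i j
    split_ifs with hij
    · subst hij
      exact covariance_comp_eval_pi i hX.aestronglyMeasurable hY.aestronglyMeasurable
    · exact covariance_comp_eval_pi_of_ne hij hX hY
  simp [hterm]

end IIDSample

lemma integral_const_add_centered_mul_centered {Ω : Type*} {mΩ : MeasurableSpace Ω}
    {ν : Measure Ω} [IsProbabilityMeasure ν] {A B : Ω → ℝ} (c : ℝ) (hA : MemLp A 2 ν)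
    (hB : MemLp B 2 ν) :
    ∫ ω, c + (A ω - ν[A]) * (B ω - ν[B]) ∂ν = c + cov[A, B; ν] := by
  have hint : Integrable (fun ω => (A ω - ν[A]) * (B ω - ν[B])) ν :=
    (hA.sub (memLp_const _)).integrable_mul (hB.sub (memLp_const _))
  rw [integral_add (integrable_const c) hint, integral_const, probReal_univ, one_smul, covariance]

/-- Unbiasedness of the bag-level estimator. -/
theorem bag_estimator_unbiased
    {X : Type*} [MeasurableSpace X]
    (μ : Measure (X × ℝ)) [IsProbabilityMeasure μ]
    (k : ℕ) (hk : 1 ≤ k)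
    (f₁ f₂ : ℝ → ℝ) (h : X → ℝ)
    (hy : ∀ᵐ z ∂μ, z.2 ∈ ({0, 1} : Set ℝ))
    (hf₁ : Integrable (fun z : X × ℝ => f₁ (h z.1)) μ)
    (hf₂ : MemLp (fun z : X × ℝ => f₂ (h z.1)) 2 μ)
    (p Ef1 Ef2 : ℝ)
    (hp : p = ∫ z, z.2 ∂μ)
    (hEf1 : Ef1 = ∫ z, f₁ (h z.1) ∂μ)
    (hEf2 : Ef2 = ∫ z, f₂ (h z.1) ∂μ) :
    ∫ ω, (Ef1 + p * Ef2
        + ((1 / (k : ℝ)) * ∑ i, (ω i).2 - p)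
          * ((∑ i, f₂ (h ((ω i).1))) - (k : ℝ) * Ef2))
      ∂(Measure.pi fun _ : Fin k => μ)
    = ∫ z, f₁ (h z.1) + z.2 * f₂ (h z.1) ∂μ := by
  have hk₀ : (k : ℝ) ≠ 0 := by positivity
  have hlabel : MemLp (fun z : X × ℝ => z.2) 2 μ := by
    refine MemLp.of_bound measurable_snd.aestronglyMeasurable 1 ?_
    filter_upwards [hy] with z hz
    rcases hz with hz | hz <;> simp_all
  have hmean_prop : ∫ ω, (1 / (k : ℝ)) * ∑ i, (ω i).2 ∂(Measure.pi fun _ : Fin k => μ) = p := by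
    rw [integral_const_mul, integral_sum_comp_eval_pi (hlabel.integrable one_le_two)]
    simp [hp, hk₀]
  have hmean_sum : ∫ ω, ∑ i, f₂ (h ((ω i).1)) ∂(Measure.pi fun _ : Fin k => μ) = k * Ef2 := by
    rw [integral_sum_comp_eval_pi (hf₂.integrable one_le_two), Fintype.card_fin, hEf2]
  have hsplit := integral_const_add_centered_mul_centered (Ef1 + p * Ef2)
    ((memLp_sum_comp_eval_pi (ι := Fin k) hlabel).const_mul (1 / (k : ℝ)))
    (memLp_sum_comp_eval_pi (ι := Fin k) hf₂)
  rw [hmean_prop, hmean_sum] at hsplit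
  have hcross : Integrable (fun z : X × ℝ => z.2 * f₂ (h z.1)) μ := hlabel.integrable_mul hf₂
  rw [hsplit, covariance_const_mul_left, covariance_sum_comp_eval_pi hlabel hf₂, Fintype.card_fin,
    covariance_eq_sub hlabel hf₂, integral_add hf₁ hcross, hp, hEf1, hEf2]
  simp only [Pi.mul_apply]
  field_simp
  ring
end

section
/- Variance bound for the bag-level estimator: under the same setup, Var(ℓ_b) ≤ (5/2)·E_x[(f₂(h(x)))²], where the bound is independent of the bag size k. -/
/-!
Write `v = y - p` and `u = f₂ ∘ h - E f₂`, both centred. Then `ℓ_b` equals the constant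
`E f₁ + p E f₂` plus `k⁻¹ (∑ vᵢ)(∑ uᵢ)`, so its variance is at most `k⁻² E[(∑ vᵢ)² (∑ uᵢ)²]`.
Adding one sample at a time and using independence, this fourth mixed moment equals
`k E[v²u²] + k(k-1)(E[v²] E[u²] + 2 E[vu]²)`. Since `|v| ≤ 1` and `E[v²] = p(1-p) ≤ 1/4`, every
term is controlled by `Var u ≤ E[f₂(h x)²]`, with total at most `(9/4) k² Var u`.
-/

open MeasureTheory ProbabilityTheory Finset
open scoped ENNReal

section Centered

variable {Ω : Type*} [MeasurableSpace Ω] {P : Measure Ω} [IsProbabilityMeasure P] {X : Ω → ℝ}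

theorem integral_sub_integral_eq_zero (hX : Integrable X P) :
    ∫ ω, (X ω - ∫ ω', X ω' ∂P) ∂P = 0 := by
  rw [integral_sub hX (integrable_const _)]
  simp

theorem abs_sub_integral_le_one (hX : ∀ᵐ ω ∂P, X ω ∈ Set.Icc 0 1) :
    ∀ᵐ ω ∂P, |X ω - ∫ ω', X ω' ∂P| ≤ 1 := by
  have h0 : 0 ≤ ∫ ω, X ω ∂P := integral_nonneg_of_ae (hX.mono fun _ h => h.1)
  have h1 : ∫ ω, X ω ∂P ≤ 1 := by
    have := norm_integral_le_of_norm_le_const (C := 1) (hX.mono fun ω h => by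
      rw [Real.norm_eq_abs, abs_of_nonneg h.1]; exact h.2)
    simpa [Real.norm_eq_abs, abs_of_nonneg h0] using this
  filter_upwards [hX] with ω h
  rw [abs_le]
  constructor <;> linarith [h.1, h.2]

theorem integral_sub_integral_sq_le_quarter (hXm : AEMeasurable X P)
    (hX : ∀ᵐ ω ∂P, X ω ∈ Set.Icc 0 1) :
    ∫ ω, (X ω - ∫ ω', X ω' ∂P) ^ 2 ∂P ≤ 1 / 4 := by
  rw [← variance_eq_integral hXm]
  exact (variance_le_sq_of_bounded hX hXm).trans_eq (by norm_num)

end Centered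

section Independent

variable {Ω : Type*} [MeasurableSpace Ω] {P : Measure Ω}

theorem integral_add_sq_mul_add_sq {A B a b : Ω → ℝ}
    (hA : MemLp A ∞ P) (hB : MemLp B 2 P) (ha : MemLp a ∞ P) (hb : MemLp b 2 P) :
    ∫ ω, (A ω + a ω) ^ 2 * (B ω + b ω) ^ 2 ∂P
      = ∫ ω, A ω ^ 2 * B ω ^ 2 ∂P + ∫ ω, A ω ^ 2 * b ω ^ 2 ∂P + ∫ ω, B ω ^ 2 * a ω ^ 2 ∂P
        + 4 * ∫ ω, A ω * B ω * (a ω * b ω) ∂P + ∫ ω, a ω ^ 2 * b ω ^ 2 ∂P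
        + 2 * (∫ ω, A ω ^ 2 * B ω * b ω ∂P + ∫ ω, A ω * B ω ^ 2 * a ω ∂P
          + ∫ ω, A ω * (a ω * b ω ^ 2) ∂P + ∫ ω, B ω * (a ω ^ 2 * b ω) ∂P) := by
  have hint : ∀ {φ f g : Ω → ℝ} (H : Ω → ℝ), MemLp φ ∞ P → MemLp f 2 P → MemLp g 2 P →
      (∀ ω, H ω = φ ω * (f ω * g ω)) → Integrable H P := fun _ hφ hf hg hH =>
    ((hf.integrable_mul hg).mul_of_top_right hφ).congr (ae_of_all _ fun ω => (hH ω).symm)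
  have hAA : MemLp (fun ω => A ω * A ω) ∞ P := hA.mul hA
  have hAa : MemLp (fun ω => A ω * a ω) ∞ P := ha.mul hA
  have haa : MemLp (fun ω => a ω * a ω) ∞ P := ha.mul ha
  -- Each monomial is an `L^∞` factor times two `L²` factors; `fun_prop` assembles the sums below.
  have := hint (fun ω => A ω ^ 2 * B ω ^ 2) hAA hB hB fun ω => by ring
  have := hint (fun ω => A ω ^ 2 * b ω ^ 2) hAA hb hb fun ω => by ring
  have := hint (fun ω => B ω ^ 2 * a ω ^ 2) haa hB hB fun ω => by ring
  have := hint (fun ω => A ω * B ω * (a ω * b ω)) hAa hB hb fun ω => by ring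
  have := hint (fun ω => a ω ^ 2 * b ω ^ 2) haa hb hb fun ω => by ring
  have := hint (fun ω => A ω ^ 2 * B ω * b ω) hAA hB hb fun ω => by ring
  have := hint (fun ω => A ω * B ω ^ 2 * a ω) hAa hB hB fun ω => by ring
  have := hint (fun ω => A ω * (a ω * b ω ^ 2)) hAa hb hb fun ω => by ring
  have := hint (fun ω => B ω * (a ω ^ 2 * b ω)) haa hB hb fun ω => by ring
  have hexp : ∀ ω, (A ω + a ω) ^ 2 * (B ω + b ω) ^ 2 =
      A ω ^ 2 * B ω ^ 2 + A ω ^ 2 * b ω ^ 2 + B ω ^ 2 * a ω ^ 2 + 4 * (A ω * B ω * (a ω * b ω))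
        + a ω ^ 2 * b ω ^ 2 + 2 * (A ω ^ 2 * B ω * b ω + A ω * B ω ^ 2 * a ω
          + A ω * (a ω * b ω ^ 2) + B ω * (a ω ^ 2 * b ω)) := fun ω => by ring
  simp_rw [hexp]
  rw [integral_add (by fun_prop) (by fun_prop), integral_add (by fun_prop) (by fun_prop),
    integral_add (by fun_prop) (by fun_prop), integral_add (by fun_prop) (by fun_prop),
    integral_add (by fun_prop) (by fun_prop), integral_const_mul, integral_const_mul,
    integral_add (by fun_prop) (by fun_prop), integral_add (by fun_prop) (by fun_prop),
    integral_add (by fun_prop) (by fun_prop)]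

theorem integral_add_sq_mul_add_sq_of_indepFun {A B a b : Ω → ℝ}
    (hind : IndepFun (fun ω => (A ω, B ω)) (fun ω => (a ω, b ω)) P)
    (hA : MemLp A ∞ P) (hB : MemLp B 2 P) (ha : MemLp a ∞ P) (hb : MemLp b 2 P)
    (hA0 : ∫ ω, A ω ∂P = 0) (hB0 : ∫ ω, B ω ∂P = 0)
    (ha0 : ∫ ω, a ω ∂P = 0) (hb0 : ∫ ω, b ω ∂P = 0) :
    ∫ ω, (A ω + a ω) ^ 2 * (B ω + b ω) ^ 2 ∂P
      = ∫ ω, A ω ^ 2 * B ω ^ 2 ∂P + (∫ ω, A ω ^ 2 ∂P) * (∫ ω, b ω ^ 2 ∂P)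
        + (∫ ω, a ω ^ 2 ∂P) * (∫ ω, B ω ^ 2 ∂P)
        + 4 * ((∫ ω, A ω * B ω ∂P) * (∫ ω, a ω * b ω ∂P)) + ∫ ω, a ω ^ 2 * b ω ^ 2 ∂P := by
  have hsplit : ∀ {F G : ℝ × ℝ → ℝ}, Measurable F → Measurable G →
      ∫ ω, F (A ω, B ω) * G (a ω, b ω) ∂P
        = (∫ ω, F (A ω, B ω) ∂P) * ∫ ω, G (a ω, b ω) ∂P := fun hF hG =>
    hind.integral_fun_comp_mul_comp (hA.aemeasurable.prodMk hB.aemeasurable)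
      (ha.aemeasurable.prodMk hb.aemeasurable) hF.aestronglyMeasurable hG.aestronglyMeasurable
  have e2 : ∫ ω, A ω ^ 2 * b ω ^ 2 ∂P = (∫ ω, A ω ^ 2 ∂P) * ∫ ω, b ω ^ 2 ∂P :=
    hsplit (F := fun x => x.1 ^ 2) (G := fun y => y.2 ^ 2) (by fun_prop) (by fun_prop)
  have e3 : ∫ ω, B ω ^ 2 * a ω ^ 2 ∂P = (∫ ω, B ω ^ 2 ∂P) * ∫ ω, a ω ^ 2 ∂P :=
    hsplit (F := fun x => x.2 ^ 2) (G := fun y => y.1 ^ 2) (by fun_prop) (by fun_prop)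
  have e4 : ∫ ω, A ω * B ω * (a ω * b ω) ∂P = (∫ ω, A ω * B ω ∂P) * ∫ ω, a ω * b ω ∂P :=
    hsplit (F := fun x => x.1 * x.2) (G := fun y => y.1 * y.2) (by fun_prop) (by fun_prop)
  have e6 : ∫ ω, A ω ^ 2 * B ω * b ω ∂P = (∫ ω, A ω ^ 2 * B ω ∂P) * ∫ ω, b ω ∂P :=
    hsplit (F := fun x => x.1 ^ 2 * x.2) (G := Prod.snd) (by fun_prop) (by fun_prop)
  have e7 : ∫ ω, A ω * B ω ^ 2 * a ω ∂P = (∫ ω, A ω * B ω ^ 2 ∂P) * ∫ ω, a ω ∂P :=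
    hsplit (F := fun x => x.1 * x.2 ^ 2) (G := Prod.fst) (by fun_prop) (by fun_prop)
  have e8 : ∫ ω, A ω * (a ω * b ω ^ 2) ∂P = (∫ ω, A ω ∂P) * ∫ ω, a ω * b ω ^ 2 ∂P :=
    hsplit (F := Prod.fst) (G := fun y => y.1 * y.2 ^ 2) (by fun_prop) (by fun_prop)
  have e9 : ∫ ω, B ω * (a ω ^ 2 * b ω) ∂P = (∫ ω, B ω ∂P) * ∫ ω, a ω ^ 2 * b ω ∂P :=
    hsplit (F := Prod.snd) (G := fun y => y.1 ^ 2 * y.2) (by fun_prop) (by fun_prop)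
  rw [integral_add_sq_mul_add_sq hA hB ha hb, e2, e3, e4, e6, e7, e8, e9, hA0, hB0, ha0, hb0]
  ring
end Independent

section Pi

variable {E ι : Type*} [MeasurableSpace E] {μ : Measure E} [IsProbabilityMeasure μ] [Fintype ι]
  {f v u : E → ℝ}

theorem memLp_comp_eval {p : ℝ≥0∞} (hf : MemLp f p μ) (i : ι) :
    MemLp (fun ω : ι → E => f (ω i)) p (Measure.pi fun _ => μ) :=
  hf.comp_measurePreserving (measurePreserving_eval _ i)

theorem aestronglyMeasurable_sum_comp_eval (hf : AEStronglyMeasurable f μ) (s : Finset ι) :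
    AEStronglyMeasurable (fun ω : ι → E => ∑ i ∈ s, f (ω i)) (Measure.pi fun _ => μ) :=
  Finset.aestronglyMeasurable_fun_sum s fun i _ =>
    hf.comp_quasiMeasurePreserving (Measure.quasiMeasurePreserving_eval _ i)

theorem integral_sum_comp_eval (hf : Integrable f μ) (s : Finset ι) :
    ∫ ω : ι → E, ∑ i ∈ s, f (ω i) ∂Measure.pi (fun _ => μ) = #s * ∫ z, f z ∂μ := by
  rw [integral_finsetSum _ fun i _ => integrable_comp_eval hf]
  simp [integral_comp_eval (μ := fun _ : ι => μ) hf.aestronglyMeasurable]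

theorem integral_sum_mul_sum_pi (hv : MemLp v 2 μ) (hu : MemLp u 2 μ) (hv0 : ∫ z, v z ∂μ = 0)
    (s : Finset ι) :
    ∫ ω : ι → E, (∑ i ∈ s, v (ω i)) * (∑ i ∈ s, u (ω i)) ∂Measure.pi (fun _ => μ)
      = #s * ∫ z, v z * u z ∂μ := by
  classical
  have hind : iIndepFun (fun i (ω : ι → E) => (v (ω i), u (ω i))) (Measure.pi fun _ => μ) :=
    iIndepFun_pi fun _ => hv.aemeasurable.prodMk hu.aemeasurable
  have hterm : ∀ i j : ι, ∫ ω, v (ω i) * u (ω j) ∂Measure.pi (fun _ => μ)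
      = if i = j then ∫ z, v z * u z ∂μ else 0 := by
    intro i j
    split_ifs with hij
    · subst hij
      exact integral_comp_eval (μ := fun _ : ι => μ) (f := fun z => v z * u z)
        (hv.aestronglyMeasurable.mul hu.aestronglyMeasurable)
    · refine ((hind.indepFun hij).integral_fun_comp_mul_comp (f := Prod.fst) (g := Prod.snd)
        ((memLp_comp_eval hv i).aemeasurable.prodMk (memLp_comp_eval hu i).aemeasurable)
        ((memLp_comp_eval hv j).aemeasurable.prodMk (memLp_comp_eval hu j).aemeasurable)
        measurable_fst.aestronglyMeasurable measurable_snd.aestronglyMeasurable).trans ?_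
      dsimp only
      rw [integral_comp_eval (μ := fun _ : ι => μ) hv.aestronglyMeasurable, hv0, zero_mul]
  have hint : ∀ i j, Integrable (fun ω : ι → E => v (ω i) * u (ω j)) (Measure.pi fun _ => μ) :=
    fun i j => (memLp_comp_eval hv i).integrable_mul (memLp_comp_eval hu j)
  simp_rw [sum_mul_sum]
  rw [integral_finsetSum _ fun i _ => integrable_finsetSum _ fun j _ => hint i j]
  simp_rw [integral_finsetSum _ fun j _ => hint _ j, hterm]
  simp

theorem integral_sum_sq_mul_sum_sq_pi (hv : MemLp v ∞ μ) (hu : MemLp u 2 μ)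
    (hv0 : ∫ z, v z ∂μ = 0) (hu0 : ∫ z, u z ∂μ = 0) (s : Finset ι) :
    ∫ ω : ι → E, (∑ i ∈ s, v (ω i)) ^ 2 * (∑ i ∈ s, u (ω i)) ^ 2 ∂Measure.pi (fun _ => μ)
      = #s * ∫ z, v z ^ 2 * u z ^ 2 ∂μ
        + #s * (#s - 1) * ((∫ z, v z ^ 2 ∂μ) * (∫ z, u z ^ 2 ∂μ)
          + 2 * (∫ z, v z * u z ∂μ) ^ 2) := by
  classical
  set P := Measure.pi fun _ : ι => μ
  have hv2 : MemLp v 2 μ := hv.mono_exponent le_top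
  have hvm := hv.aestronglyMeasurable
  have hum := hu.aestronglyMeasurable
  have hcomp : ∀ {f : E → ℝ}, AEStronglyMeasurable f μ → ∀ i, ∫ ω, f (ω i) ∂P = ∫ z, f z ∂μ :=
    fun hf _ => integral_comp_eval hf
  have hind : iIndepFun (fun i (ω : ι → E) => (v (ω i), u (ω i))) P :=
    iIndepFun_pi fun _ => hv.aemeasurable.prodMk hu.aemeasurable
  induction s using Finset.induction_on with
  | empty => simp
  | insert i s hi ih =>
    have hpair : IndepFun (fun ω => (∑ j ∈ s, v (ω j), ∑ j ∈ s, u (ω j)))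
        (fun ω => (v (ω i), u (ω i))) P := by
      convert hind.indepFun_finsetSum_of_notMem₀ (fun j =>
        (memLp_comp_eval hv j).aemeasurable.prodMk (memLp_comp_eval hu j).aemeasurable) hi using 1
      ext ω <;> simp [Prod.fst_sum, Prod.snd_sum]
    have evv : ∫ ω, (∑ j ∈ s, v (ω j)) ^ 2 ∂P = #s * ∫ z, v z ^ 2 ∂μ := by
      simpa only [sq] using integral_sum_mul_sum_pi hv2 hv2 hv0 s
    have euu : ∫ ω, (∑ j ∈ s, u (ω j)) ^ 2 ∂P = #s * ∫ z, u z ^ 2 ∂μ := by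
      simpa only [sq] using integral_sum_mul_sum_pi hu hu hu0 s
    simp_rw [sum_insert hi, add_comm (v _), add_comm (u _)]
    rw [integral_add_sq_mul_add_sq_of_indepFun hpair
      (memLp_finsetSum s fun j _ => memLp_comp_eval hv j)
      (memLp_finsetSum s fun j _ => memLp_comp_eval hu j) (memLp_comp_eval hv i)
      (memLp_comp_eval hu i)
      (by rw [integral_sum_comp_eval (hv2.integrable one_le_two), hv0, mul_zero])
      (by rw [integral_sum_comp_eval (hu.integrable one_le_two), hu0, mul_zero])
      (by rw [hcomp hvm, hv0]) (by rw [hcomp hum, hu0]), ih, evv, euu,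
      integral_sum_mul_sum_pi hv2 hu hv0 s, hcomp (f := fun z => v z ^ 2) (by fun_prop),
      hcomp (f := fun z => u z ^ 2) (by fun_prop), hcomp (f := fun z => v z * u z) (by fun_prop),
      hcomp (f := fun z => v z ^ 2 * u z ^ 2) (by fun_prop), card_insert_of_notMem hi]
    push_cast
    ring

theorem variance_sum_mul_sum_pi_le (hvm : AEStronglyMeasurable v μ)
    (hv1 : ∀ᵐ z ∂μ, |v z| ≤ 1) (hvV : ∫ z, v z ^ 2 ∂μ ≤ 1 / 4) (hu : MemLp u 2 μ)
    (hv0 : ∫ z, v z ∂μ = 0) (hu0 : ∫ z, u z ∂μ = 0) :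
    Var[fun ω : ι → E => (∑ i, v (ω i)) * ∑ i, u (ω i); Measure.pi fun _ => μ]
      ≤ 9 / 4 * Fintype.card ι ^ 2 * ∫ z, u z ^ 2 ∂μ := by
  have hv : MemLp v ∞ μ := memLp_top_of_bound hvm 1 (by simpa only [Real.norm_eq_abs] using hv1)
  have hvu : MemLp (v * u) 2 μ := hu.mul hv
  have hτ : ∫ z, v z ^ 2 * u z ^ 2 ∂μ ≤ ∫ z, u z ^ 2 ∂μ := by
    refine integral_mono_ae (by simpa [mul_pow] using hvu.integrable_sq) hu.integrable_sq ?_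
    filter_upwards [hv1] with z hz
    have : v z ^ 2 ≤ 1 := by nlinarith [abs_nonneg (v z), sq_abs (v z)]
    nlinarith [sq_nonneg (u z)]
  have hρ : (∫ z, v z * u z ∂μ) ^ 2 ≤ ∫ z, v z ^ 2 * u z ^ 2 ∂μ := by
    have := variance_nonneg (v * u) μ
    rw [variance_eq_sub hvu] at this
    simpa [mul_pow] using this
  have hσ : 0 ≤ ∫ z, u z ^ 2 ∂μ := integral_nonneg fun z => sq_nonneg _
  have hk : (0 : ℝ) ≤ Fintype.card ι * (Fintype.card ι - 1) := by
    rcases Nat.eq_zero_or_pos (Fintype.card ι) with h | h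
    · simp [h]
    · have : (1 : ℝ) ≤ Fintype.card ι := by exact_mod_cast h
      positivity
  refine (variance_le_expectation_sq ((aestronglyMeasurable_sum_comp_eval hvm univ).mul
    (aestronglyMeasurable_sum_comp_eval hu.aestronglyMeasurable univ))).trans ?_
  simp only [Pi.pow_apply, Pi.mul_apply, mul_pow]
  rw [integral_sum_sq_mul_sum_sq_pi (ι := ι) hv hu hv0 hu0, card_univ]
  nlinarith [mul_le_mul_of_nonneg_left hτ (Nat.cast_nonneg (α := ℝ) (Fintype.card ι)),
    mul_le_mul_of_nonneg_left hvV hσ, mul_nonneg hk hσ]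

theorem variance_sum_sub_integral_mul_sum_sub_integral_pi_le {Y g : E → ℝ}
    (hYm : AEMeasurable Y μ) (hY : ∀ᵐ z ∂μ, Y z ∈ Set.Icc 0 1) (hg : MemLp g 2 μ) :
    Var[fun ω : ι → E => (∑ i, (Y (ω i) - ∫ z, Y z ∂μ)) * ∑ i, (g (ω i) - ∫ z, g z ∂μ);
      Measure.pi fun _ => μ] ≤ 9 / 4 * Fintype.card ι ^ 2 * Var[g; μ] := by
  rw [variance_eq_integral hg.aemeasurable]
  exact variance_sum_mul_sum_pi_le (v := fun z => Y z - ∫ z, Y z ∂μ)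
    (u := fun z => g z - ∫ z, g z ∂μ) (by fun_prop) (abs_sub_integral_le_one hY)
    (integral_sub_integral_sq_le_quarter hYm hY) (hg.sub (memLp_const _))
    (integral_sub_integral_eq_zero ((memLp_of_bounded hY hYm.aestronglyMeasurable 1).integrable
      le_rfl)) (integral_sub_integral_eq_zero (hg.integrable one_le_two))

end Pi

theorem bag_estimator_variance_general
    {X : Type*} [MeasurableSpace X]
    (μ : Measure (X × ℝ)) [IsProbabilityMeasure μ]
    (k : ℕ) (hk : 1 ≤ k)
    (f₂ : ℝ → ℝ) (h : X → ℝ)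
    (hy : ∀ᵐ z ∂μ, z.2 ∈ ({0, 1} : Set ℝ))
    (hf₂ : MemLp (fun z : X × ℝ => f₂ (h z.1)) 2 μ)
    (p Ef1 Ef2 : ℝ)
    (hp : p = ∫ z, z.2 ∂μ)
    (hEf2 : Ef2 = ∫ z, f₂ (h z.1) ∂μ)
    (ℓb : (Fin k → X × ℝ) → ℝ)
    (hℓb : ∀ ω, ℓb ω = Ef1 + p * Ef2
        + ((1 / (k : ℝ)) * ∑ i, (ω i).2 - p)
          * ((∑ i, f₂ (h ((ω i).1))) - (k : ℝ) * Ef2)) :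
    ∫ ω, (ℓb ω - ∫ ω', ℓb ω' ∂(Measure.pi fun _ : Fin k => μ)) ^ 2
        ∂(Measure.pi fun _ : Fin k => μ)
      ≤ 5 / 2 * ∫ z, (f₂ (h z.1)) ^ 2 ∂μ := by
  subst hp hEf2
  set P := Measure.pi fun _ : Fin k => μ
  set v : X × ℝ → ℝ := fun z => z.2 - ∫ z, z.2 ∂μ
  set u : X × ℝ → ℝ := fun z => f₂ (h z.1) - ∫ z, f₂ (h z.1) ∂μ
  set W : (Fin k → X × ℝ) → ℝ := fun ω => (∑ i, v (ω i)) * ∑ i, u (ω i)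
  have hk0 : (k : ℝ) ≠ 0 := Nat.cast_ne_zero.2 (by omega)
  have hℓb' : ℓb = fun ω =>
      Ef1 + (∫ z, z.2 ∂μ) * (∫ z, f₂ (h z.1) ∂μ) + (k : ℝ)⁻¹ * W ω := by
    ext ω
    simp only [hℓb, W, v, u, sum_sub_distrib, sum_const, card_univ, Fintype.card_fin,
      nsmul_eq_mul]
    field_simp
  have hy01 : ∀ᵐ z ∂μ, z.2 ∈ Set.Icc (0 : ℝ) 1 := hy.mono fun z hz => by
    rcases hz with hz | hz <;> norm_num [Set.mem_singleton_iff.1 hz, hz]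
  have hg := hf₂.aestronglyMeasurable
  have hWm : AEStronglyMeasurable W P :=
    (aestronglyMeasurable_sum_comp_eval (f := v) (by fun_prop) univ).mul
      (aestronglyMeasurable_sum_comp_eval (f := u) (hg.sub aestronglyMeasurable_const) univ)
  have hW := variance_sum_sub_integral_mul_sum_sub_integral_pi_le (ι := Fin k)
    measurable_snd.aemeasurable hy01 hf₂
  rw [Fintype.card_fin] at hW
  calc ∫ ω, (ℓb ω - ∫ ω', ℓb ω' ∂P) ^ 2 ∂P
      = Var[ℓb; P] := (variance_eq_integral (by rw [hℓb']; fun_prop)).symm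
    _ = (k : ℝ)⁻¹ ^ 2 * Var[W; P] := by
      rw [hℓb', variance_const_add (by fun_prop), variance_const_mul]
    _ ≤ (k : ℝ)⁻¹ ^ 2 * (9 / 4 * k ^ 2 * Var[fun z => f₂ (h z.1); μ]) := by gcongr
    _ = 9 / 4 * Var[fun z => f₂ (h z.1); μ] := by field_simp
    _ ≤ 5 / 2 * ∫ z, f₂ (h z.1) ^ 2 ∂μ := by
      have hle := variance_le_expectation_sq hg
      simp only [Pi.pow_apply] at hle
      linarith [variance_nonneg (fun z => f₂ (h z.1)) μ]

/-- Variance bound for the bag-level estimator, independent of the bag size. -/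
theorem bag_estimator_variance
    {X : Type*} [MeasurableSpace X]
    (μ : Measure (X × ℝ)) [IsProbabilityMeasure μ]
    (k : ℕ) (hk : 1 ≤ k)
    (f₁ f₂ : ℝ → ℝ) (h : X → ℝ)
    (hy : ∀ᵐ z ∂μ, z.2 ∈ ({0, 1} : Set ℝ))
    (hf₁ : Integrable (fun z : X × ℝ => f₁ (h z.1)) μ)
    (hf₂ : MemLp (fun z : X × ℝ => f₂ (h z.1)) 2 μ)
    (p Ef1 Ef2 : ℝ)
    (hp : p = ∫ z, z.2 ∂μ)
    (hEf1 : Ef1 = ∫ z, f₁ (h z.1) ∂μ)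
    (hEf2 : Ef2 = ∫ z, f₂ (h z.1) ∂μ)
    (ℓb : (Fin k → X × ℝ) → ℝ)
    (hℓb : ∀ ω, ℓb ω = Ef1 + p * Ef2
        + ((1 / (k : ℝ)) * ∑ i, (ω i).2 - p)
          * ((∑ i, f₂ (h ((ω i).1))) - (k : ℝ) * Ef2)) :
    ∫ ω, (ℓb ω - ∫ ω', ℓb ω' ∂(Measure.pi fun _ : Fin k => μ)) ^ 2
        ∂(Measure.pi fun _ : Fin k => μ)
      ≤ 5 / 2 * ∫ z, (f₂ (h z.1)) ^ 2 ∂μ :=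
  bag_estimator_variance_general μ k hk f₂ h hy hf₂ p Ef1 Ef2 hp hEf2 ℓb hℓb
end

section
/- For all real w, log²(1 + e^w) ≤ 1 + w². -/
/-- For all real `w`, `log²(1 + e^w) ≤ 1 + w²`. -/
theorem log_sq_one_add_exp_le (w : ℝ) :
    (Real.log (1 + Real.exp w)) ^ 2 ≤ 1 + w ^ 2 := by
  rcases le_or_gt w 0 with hw | hw
  · -- 0 < log(1+e^w) ≤ log 2 < 1
    have h1 : (1:ℝ) < 1 + Real.exp w := by nlinarith [Real.exp_pos w]
    have h2 : 1 + Real.exp w ≤ 2 := by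
      have := Real.exp_le_one_iff.mpr hw; linarith
    have hl0 : 0 < Real.log (1 + Real.exp w) := Real.log_pos h1
    have hl2 : Real.log (1 + Real.exp w) ≤ Real.log 2 :=
      Real.log_le_log (by linarith) h2
    have : Real.log 2 < 1 := by
      have := Real.log_two_lt_d9; linarith
    nlinarith [sq_nonneg w]
  · -- w > 0
    set t := Real.log (1 + Real.exp (-w)) with ht
    have ht0 : 0 < t := Real.log_pos (by nlinarith [Real.exp_pos (-w)])
    have hte : t ≤ Real.exp (-w) := by
      have := Real.add_one_le_exp t
      rw [ht, Real.exp_log (by positivity)] at this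
      linarith
    have hL : Real.log (1 + Real.exp w) = w + t := by
      rw [ht, ← Real.log_exp w, ← Real.log_mul (Real.exp_ne_zero w) (by positivity),
        Real.log_exp w]
      rw [mul_add, mul_one, ← Real.exp_add, add_neg_cancel, Real.exp_zero, add_comm]
    have hs : w ≤ Real.sinh w := Real.self_le_sinh_iff.mpr hw.le
    rw [Real.sinh_eq] at hs
    -- so 2w ≤ e^w - e^{-w}, hence 2w e^{-w} + e^{-2w} ≤ 1
    have hew : 0 < Real.exp (-w) := Real.exp_pos _
    have hprod : Real.exp w * Real.exp (-w) = 1 := by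
      rw [← Real.exp_add, add_neg_cancel, Real.exp_zero]
    have key : 2 * w * Real.exp (-w) + Real.exp (-w) ^ 2 ≤ 1 := by
      nlinarith [hew, Real.exp_pos w]
    rw [hL]
    nlinarith [sq_nonneg (t - Real.exp (-w))]
end

section
/- Variance-regret transfer under quadratic sandwich: suppose a function class H, Bayes-optimal h*, best-in-class ĥ*, a loss whose extension ℓ̄ satisfies (C/2)(f(a)−f(b))² ≥ ℓ̄(a,b) − ℓ̄(b,b) ≥ (c/2)(f(a)−f(b))² for constants C ≥ c > 0, and define γ_f(h₁,h₂) = E_x[(f(h₁(x)) − f(h₂(x)))²]. Then for every h ∈ H: γ_f(h, ĥ*) ≤ (4/c)·(𝓛(h) − 𝓛(ĥ*)) + 2·(C/c + 1)·γ_f(ĥ*, h*). -/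
/-!
Adding the sandwich at `(a, b)` and at `(b, a)` gives `c (f a - f b)² ≤ (b - a) (f₂ a - f₂ b)`,
so `f₁` is monotone, `f₂` antitone, and `f a` determines `f₁ a` and `f₂ a`. A level set of `f`
with two points absorbs every point close to it, so by connectedness `f` is injective or
constant on `[0, 1]`; if injective, `h` is measurable as soon as `f ∘ h` is, which makes all the
losses integrable. Integrating the sandwich at `(h x, h* x)` gives
`𝓛 h - 𝓛 ĥ* ≥ c/2 γ(h, h*) - C/2 γ(ĥ*, h*)`, and `(u - v)² ≤ 2 (u - w)² + 2 (v - w)²` finishes.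
-/

open MeasureTheory Set Function

section Measurability

variable {X : Type*} [MeasurableSpace X] {ν : Measure X} {s : Set ℝ} {v : ℝ → ℝ} {u : X → ℝ}

theorem MonotoneOn.aemeasurable_comp (hv : MonotoneOn v s) (hl : BddBelow (v '' s))
    (hu' : BddAbove (v '' s)) (hu : ∀ x, u x ∈ s) (hum : AEMeasurable u ν) :
    AEMeasurable (fun x ↦ v (u x)) ν := by
  obtain ⟨w, hw, hvw⟩ := hv.exists_monotone_extension hl hu'
  exact (hw.measurable.comp_aemeasurable hum).congr (ae_of_all _ fun x ↦ (hvw (hu x)).symm)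

theorem AntitoneOn.aemeasurable_comp (hv : AntitoneOn v s) (hl : BddBelow (v '' s))
    (hu' : BddAbove (v '' s)) (hu : ∀ x, u x ∈ s) (hum : AEMeasurable u ν) :
    AEMeasurable (fun x ↦ v (u x)) ν := by
  obtain ⟨w, hw, hvw⟩ := hv.exists_antitone_extension hl hu'
  exact (hw.measurable.comp_aemeasurable hum).congr (ae_of_all _ fun x ↦ (hvw (hu x)).symm)

theorem MonotoneOn.monotoneOn_invFunOn (hv : MonotoneOn v s) (hinj : InjOn v s) :
    MonotoneOn (invFunOn v s) (v '' s) := by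
  rintro _ ⟨a, ha, rfl⟩ _ ⟨b, hb, rfl⟩ hab
  rw [hinj.leftInvOn_invFunOn ha, hinj.leftInvOn_invFunOn hb]
  exact ((hv.strictMonoOn_of_injOn hinj).le_iff_le ha hb).1 hab

theorem AntitoneOn.antitoneOn_invFunOn (hv : AntitoneOn v s) (hinj : InjOn v s) :
    AntitoneOn (invFunOn v s) (v '' s) := by
  rintro _ ⟨a, ha, rfl⟩ _ ⟨b, hb, rfl⟩ hab
  rw [hinj.leftInvOn_invFunOn ha, hinj.leftInvOn_invFunOn hb]
  exact ((hv.strictAntiOn_of_injOn hinj).le_iff_ge ha hb).1 hab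

theorem AEMeasurable.of_comp_injOn {a b : ℝ} (hv : MonotoneOn v (Icc a b) ∨ AntitoneOn v (Icc a b))
    (hinj : InjOn v (Icc a b)) (hu : ∀ x, u x ∈ Icc a b)
    (hvu : AEMeasurable (fun x ↦ v (u x)) ν) : AEMeasurable u ν := by
  have himage : invFunOn v (Icc a b) '' (v '' Icc a b) = Icc a b := hinj.invFunOn_image subset_rfl
  have hl : BddBelow (invFunOn v (Icc a b) '' (v '' Icc a b)) := by
    rw [himage]; exact bddBelow_Icc
  have hu' : BddAbove (invFunOn v (Icc a b) '' (v '' Icc a b)) := by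
    rw [himage]; exact bddAbove_Icc
  have hinv : ∀ x, invFunOn v (Icc a b) (v (u x)) = u x := fun x ↦ hinj.leftInvOn_invFunOn (hu x)
  have hvu' : ∀ x, v (u x) ∈ v '' Icc a b := fun x ↦ mem_image_of_mem v (hu x)
  refine (?_ : AEMeasurable (fun x ↦ invFunOn v (Icc a b) (v (u x))) ν).congr (ae_of_all _ hinv)
  rcases hv with hv | hv
  · exact (hv.monotoneOn_invFunOn hinj).aemeasurable_comp hl hu' hvu' hvu
  · exact (hv.antitoneOn_invFunOn hinj).aemeasurable_comp hl hu' hvu' hvu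

end Measurability

theorem integral_sq_sub_le {X : Type*} [MeasurableSpace X] {ν : Measure X} {F G S : X → ℝ}
    (hF : MemLp F 2 ν) (hG : MemLp G 2 ν) (hS : MemLp S 2 ν) :
    ∫ x, (F x - G x) ^ 2 ∂ν ≤ 2 * ∫ x, (F x - S x) ^ 2 ∂ν + 2 * ∫ x, (G x - S x) ^ 2 ∂ν := by
  have hFS : Integrable (fun x ↦ (F x - S x) ^ 2) ν := (hF.sub hS).integrable_sq
  have hGS : Integrable (fun x ↦ (G x - S x) ^ 2) ν := (hG.sub hS).integrable_sq
  rw [← integral_const_mul, ← integral_const_mul,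
    ← integral_add (hFS.const_mul 2) (hGS.const_mul 2)]
  refine integral_mono (hF.sub hG).integrable_sq ((hFS.const_mul 2).add (hGS.const_mul 2))
    fun x ↦ ?_
  nlinarith [sq_nonneg (F x + G x - 2 * S x)]

-- `f₁ a + b * f₂ a` is `ℓ̄(a, b)`.
def Sandwich (f₁ f₂ f : ℝ → ℝ) (c C : ℝ) : Prop :=
  ∀ a ∈ Icc (0 : ℝ) 1, ∀ b ∈ Icc (0 : ℝ) 1,
    c / 2 * (f a - f b) ^ 2 ≤ f₁ a + b * f₂ a - (f₁ b + b * f₂ b) ∧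
      f₁ a + b * f₂ a - (f₁ b + b * f₂ b) ≤ C / 2 * (f a - f b) ^ 2

namespace Sandwich

variable {f₁ f₂ f : ℝ → ℝ} {c C a b : ℝ} {X : Type*} [MeasurableSpace X] {ν : Measure X}

theorem mul_sub_bounds (hs : Sandwich f₁ f₂ f c C) (ha : a ∈ Icc (0 : ℝ) 1)
    (hb : b ∈ Icc (0 : ℝ) 1) :
    c * (f a - f b) ^ 2 ≤ (b - a) * (f₂ a - f₂ b) ∧
      (b - a) * (f₂ a - f₂ b) ≤ C * (f a - f b) ^ 2 := by
  have hab := hs a ha b hb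
  have hba := hs b hb a ha
  rw [← neg_sub (f a), neg_sq] at hba
  constructor <;> linarith [hab.1, hab.2, hba.1, hba.2]

theorem antitoneOn₂ (hs : Sandwich f₁ f₂ f c C) (hc : 0 ≤ c) : AntitoneOn f₂ (Icc 0 1) := by
  intro a ha b hb hab
  have h := (hs.mul_sub_bounds ha hb).1
  rcases hab.eq_or_lt with rfl | hlt
  · exact le_rfl
  · nlinarith [mul_nonneg hc (sq_nonneg (f a - f b))]

theorem monotoneOn₁ (hs : Sandwich f₁ f₂ f c C) (hc : 0 ≤ c) : MonotoneOn f₁ (Icc 0 1) := by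
  intro a ha b hb hab
  have h := (hs b hb a ha).1
  have h₂ := hs.antitoneOn₂ hc ha hb hab
  nlinarith [mul_nonneg hc (sq_nonneg (f b - f a)), mul_nonneg ha.1 (sub_nonneg.2 h₂)]

theorem monotoneOn_or_antitoneOn (hs : Sandwich f₁ f₂ f c C) (hc : 0 ≤ c)
    (hf : f = f₁ ∨ f = f₂) : MonotoneOn f (Icc 0 1) ∨ AntitoneOn f (Icc 0 1) := by
  rcases hf with rfl | rfl
  exacts [.inl (hs.monotoneOn₁ hc), .inr (hs.antitoneOn₂ hc)]

theorem eq_and_eq_of_eq (hs : Sandwich f₁ f₂ f c C) (ha : a ∈ Icc (0 : ℝ) 1)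
    (hb : b ∈ Icc (0 : ℝ) 1) (h : f a = f b) : f₁ a = f₁ b ∧ f₂ a = f₂ b := by
  rcases eq_or_ne a b with rfl | hne
  · exact ⟨rfl, rfl⟩
  have hm := hs.mul_sub_bounds ha hb
  have hab := hs a ha b hb
  have hΔ : (f a - f b) ^ 2 = 0 := by rw [h, sub_self, sq, mul_zero]
  simp only [hΔ, mul_zero] at hm hab
  have h₂ : f₂ a = f₂ b := by
    have : (b - a) * (f₂ a - f₂ b) = 0 := le_antisymm hm.2 hm.1
    rcases mul_eq_zero.1 this with h' | h'
    · exact absurd (sub_eq_zero.1 h').symm hne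
    · exact sub_eq_zero.1 h'
  rw [h₂] at hab
  exact ⟨by linarith [hab.1, hab.2], h₂⟩

theorem eq_of_abs_sub_lt (hs : Sandwich f₁ f₂ f c C) {s₀ s₁ : ℝ} (hs₀ : s₀ ∈ Icc (0 : ℝ) 1)
    (hs₁ : s₁ ∈ Icc (0 : ℝ) 1) (hlt : s₀ < s₁) (h₀₁ : f s₀ = f s₁)
    (ha : a ∈ Icc (0 : ℝ) 1) (hb : b ∈ Icc (0 : ℝ) 1) (hb₀ : f b = f s₀)
    (hab : (C - c) * |a - b| < 2 * c * (s₁ - s₀)) : f a = f s₀ := by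
  by_contra hne
  have hΔ : 0 < (f a - f s₀) ^ 2 := by positivity [sub_ne_zero.2 hne]
  obtain ⟨h₁b, h₂b⟩ := hs.eq_and_eq_of_eq hb hs₀ hb₀
  obtain ⟨h₁s, h₂s⟩ := hs.eq_and_eq_of_eq hs₁ hs₀ h₀₁.symm
  -- comparing the sandwich at `s₀` and at `s₁` bounds the slope of `f₂` by the gap `C - c`
  have hslope : (s₁ - s₀) * |f₂ a - f₂ s₀| ≤ (C - c) / 2 * (f a - f s₀) ^ 2 := by
    have h₀ := hs a ha s₀ hs₀
    have h₁ := hs a ha s₁ hs₁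
    rw [← h₀₁, h₁s, h₂s] at h₁
    rw [← abs_of_pos (sub_pos.2 hlt), ← abs_mul, abs_le]
    constructor <;> nlinarith [h₀.1, h₀.2, h₁.1, h₁.2]
  have hgap : c * (f a - f s₀) ^ 2 ≤ |a - b| * |f₂ a - f₂ s₀| := by
    have h := (hs.mul_sub_bounds ha hb).1
    rw [hb₀, h₂b] at h
    calc c * (f a - f s₀) ^ 2 ≤ (b - a) * (f₂ a - f₂ s₀) := h
      _ ≤ |a - b| * |f₂ a - f₂ s₀| := by rw [abs_sub_comm, ← abs_mul]; exact le_abs_self _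
  have : 2 * c * (s₁ - s₀) * (f a - f s₀) ^ 2 ≤ (C - c) * |a - b| * (f a - f s₀) ^ 2 := by
    nlinarith [mul_le_mul_of_nonneg_left hslope (abs_nonneg (a - b)),
      mul_le_mul_of_nonneg_left hgap (sub_nonneg.2 hlt.le)]
  exact (le_of_mul_le_mul_right this hΔ).not_gt hab

theorem injOn_or_const (hs : Sandwich f₁ f₂ f c C) (hc : 0 < c) (hCc : c ≤ C) :
    InjOn f (Icc 0 1) ∨ ∀ a ∈ Icc (0 : ℝ) 1, ∀ b ∈ Icc (0 : ℝ) 1, f a = f b := by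
  refine or_iff_not_imp_left.2 fun hinj ↦ ?_
  obtain ⟨s₀, hs₀, s₁, hs₁, h₀₁, hlt⟩ :
      ∃ s₀ ∈ Icc (0 : ℝ) 1, ∃ s₁ ∈ Icc (0 : ℝ) 1, f s₀ = f s₁ ∧ s₀ < s₁ := by
    simp only [InjOn, not_forall] at hinj
    obtain ⟨a, ha, b, hb, hab, hne⟩ := hinj
    rcases lt_or_gt_of_ne hne with h | h
    exacts [⟨a, ha, b, hb, hab, h⟩, ⟨b, hb, a, ha, hab.symm, h⟩]
  set η := 2 * c * (s₁ - s₀) / (C - c + 1)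
  have hη : 0 < η := by have := sub_pos.2 hlt; positivity
  have hnear : ∀ a ∈ Icc (0 : ℝ) 1, ∀ b ∈ Icc (0 : ℝ) 1, |a - b| < η →
      f b = f s₀ → f a = f s₀ := by
    intro a ha b hb hab hb₀
    refine hs.eq_of_abs_sub_lt hs₀ hs₁ hlt h₀₁ ha hb hb₀ ?_
    calc (C - c) * |a - b| ≤ (C - c) * η := by gcongr
      _ < (C - c + 1) * η := by linarith
      _ = 2 * c * (s₁ - s₀) := mul_div_cancel₀ _ (by linarith)
  -- the fibre of `f s₀` is relatively clopen in the connected interval `[0, 1]`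
  have hfib : ∀ a ∈ Icc (0 : ℝ) 1, f a = f s₀ := by
    intro a ha
    refine (isPreconnected_Icc.induction₂' (fun x y ↦ f x = f s₀ ↔ f y = f s₀)
      (fun x hx ↦ ?_) (fun x y z _ _ _ ↦ Iff.trans) hs₀ ha).1 rfl
    filter_upwards [nhdsWithin_le_nhds (Metric.ball_mem_nhds x hη), self_mem_nhdsWithin]
      with y hy hyI
    rw [Metric.mem_ball, Real.dist_eq] at hy
    exact ⟨⟨hnear y hyI x hx hy, hnear x hx y hyI (abs_sub_comm x y ▸ hy)⟩,
      ⟨hnear x hx y hyI (abs_sub_comm x y ▸ hy), hnear y hyI x hx hy⟩⟩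
  exact fun a ha b hb ↦ (hfib a ha).trans (hfib b hb).symm

theorem abs_diag_le (hs : Sandwich f₁ f₂ f c C) (hc : 0 ≤ c) (hb : b ∈ Icc (0 : ℝ) 1) :
    |f₁ b + b * f₂ b| ≤ max |f₁ 0| |f₁ 1| + max |f₂ 1| |f₂ 0| := by
  have h₁ := (hs.monotoneOn₁ hc).mapsTo_Icc hb
  have h₂ := (hs.antitoneOn₂ hc).mapsTo_Icc hb
  have hb₁ : |b| ≤ 1 := abs_le.2 ⟨by linarith [hb.1], hb.2⟩
  calc |f₁ b + b * f₂ b| ≤ |f₁ b| + |b| * |f₂ b| := by rw [← abs_mul]; exact abs_add_le _ _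
    _ ≤ max |f₁ 0| |f₁ 1| + 1 * max |f₂ 1| |f₂ 0| := by
      gcongr
      exacts [abs_le_max_abs_abs h₁.1 h₁.2, abs_le_max_abs_abs h₂.1 h₂.2]
    _ = _ := by rw [one_mul]

theorem aemeasurable_loss (hs : Sandwich f₁ f₂ f c C) (hc : 0 ≤ c) (hf : f = f₁ ∨ f = f₂)
    (hinj : InjOn f (Icc 0 1)) {u t : X → ℝ} (hu : ∀ x, u x ∈ Icc (0 : ℝ) 1)
    (ht : ∀ x, t x ∈ Icc (0 : ℝ) 1) (hfu : AEMeasurable (fun x ↦ f (u x)) ν)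
    (hft : AEMeasurable (fun x ↦ f (t x)) ν) :
    AEMeasurable (fun x ↦ f₁ (u x) + t x * f₂ (u x)) ν := by
  have hmono := hs.monotoneOn_or_antitoneOn hc hf
  have hum := AEMeasurable.of_comp_injOn hmono hinj hu hfu
  have htm := AEMeasurable.of_comp_injOn hmono hinj ht hft
  have h₁ := hs.monotoneOn₁ hc
  have h₂ := hs.antitoneOn₂ hc
  exact (h₁.aemeasurable_comp (bddBelow_Icc.mono h₁.image_Icc_subset)
    (bddAbove_Icc.mono h₁.image_Icc_subset) hu hum).add
    (htm.mul (h₂.aemeasurable_comp (bddBelow_Icc.mono h₂.image_Icc_subset)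
      (bddAbove_Icc.mono h₂.image_Icc_subset) hu hum))

theorem integrable_loss [IsFiniteMeasure ν] (hs : Sandwich f₁ f₂ f c C) (hc : 0 ≤ c)
    {u t : X → ℝ} (hu : ∀ x, u x ∈ Icc (0 : ℝ) 1) (ht : ∀ x, t x ∈ Icc (0 : ℝ) 1)
    (hmeas : AEMeasurable (fun x ↦ f₁ (u x) + t x * f₂ (u x)) ν)
    (hfu : MemLp (fun x ↦ f (u x)) 2 ν) (hft : MemLp (fun x ↦ f (t x)) 2 ν) :
    Integrable (fun x ↦ f₁ (u x) + t x * f₂ (u x)) ν := by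
  set K := max |f₁ 0| |f₁ 1| + max |f₂ 1| |f₂ 0|
  refine Integrable.mono' (((hfu.sub hft).integrable_sq.const_mul (C / 2)).add (integrable_const K))
    hmeas.aestronglyMeasurable (ae_of_all _ fun x ↦ ?_)
  have hex := hs (u x) (hu x) (t x) (ht x)
  have hdiag := abs_le.1 (hs.abs_diag_le hc (ht x))
  rw [Real.norm_eq_abs, abs_le]
  simp only [Pi.add_apply, Pi.sub_apply]
  constructor <;> nlinarith [mul_nonneg hc (sq_nonneg (f (u x) - f (t x)))]

theorem regret_lower_bound [IsFiniteMeasure ν] (hs : Sandwich f₁ f₂ f c C) (hc : 0 < c)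
    (hCc : c ≤ C) (hf : f = f₁ ∨ f = f₂) {g h t : X → ℝ} (hg : ∀ x, g x ∈ Icc (0 : ℝ) 1)
    (hh : ∀ x, h x ∈ Icc (0 : ℝ) 1) (ht : ∀ x, t x ∈ Icc (0 : ℝ) 1)
    (hfg : MemLp (fun x ↦ f (g x)) 2 ν) (hfh : MemLp (fun x ↦ f (h x)) 2 ν)
    (hft : MemLp (fun x ↦ f (t x)) 2 ν) :
    c / 2 * ∫ x, (f (g x) - f (t x)) ^ 2 ∂ν - C / 2 * ∫ x, (f (h x) - f (t x)) ^ 2 ∂ν ≤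
      ∫ x, f₁ (g x) + t x * f₂ (g x) ∂ν - ∫ x, f₁ (h x) + t x * f₂ (h x) ∂ν := by
  rcases hs.injOn_or_const hc hCc with hinj | hconst
  · have hint : ∀ u : X → ℝ, (∀ x, u x ∈ Icc (0 : ℝ) 1) → MemLp (fun x ↦ f (u x)) 2 ν →
        Integrable (fun x ↦ f₁ (u x) + t x * f₂ (u x)) ν := fun u hu hfu ↦
      hs.integrable_loss hc.le hu ht (hs.aemeasurable_loss hc.le hf hinj hu ht
        hfu.aestronglyMeasurable.aemeasurable hft.aestronglyMeasurable.aemeasurable) hfu hft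
    have hgt : Integrable (fun x ↦ c / 2 * (f (g x) - f (t x)) ^ 2) ν :=
      (hfg.sub hft).integrable_sq.const_mul _
    have hht : Integrable (fun x ↦ C / 2 * (f (h x) - f (t x)) ^ 2) ν :=
      (hfh.sub hft).integrable_sq.const_mul _
    rw [← integral_const_mul, ← integral_const_mul, ← integral_sub hgt hht,
      ← integral_sub (hint g hg hfg) (hint h hh hfh)]
    refine integral_mono (hgt.sub hht) ((hint g hg hfg).sub (hint h hh hfh)) fun x ↦ ?_
    have hgx := (hs (g x) (hg x) (t x) (ht x)).1
    have hhx := (hs (h x) (hh x) (t x) (ht x)).2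
    linarith
  · have hsq : ∀ u : X → ℝ, (∀ x, u x ∈ Icc (0 : ℝ) 1) → ∀ x, (f (u x) - f (t x)) ^ 2 = 0 :=
      fun u hu x ↦ by rw [hconst _ (hu x) _ (ht x), sub_self, sq, mul_zero]
    have hloss : ∀ u : X → ℝ, (∀ x, u x ∈ Icc (0 : ℝ) 1) →
        ∀ x, f₁ (u x) + t x * f₂ (u x) = f₁ (t x) + t x * f₂ (t x) := by
      intro u hu x
      have hx := hs (u x) (hu x) (t x) (ht x)
      rw [hsq u hu x, mul_zero] at hx
      linarith [hx.1, hx.2]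
    simp only [hsq g hg, hsq h hh, hloss g hg, hloss h hh, integral_zero, mul_zero, sub_self,
      le_refl]

end Sandwich

theorem variance_regret_transfer_general
    {X : Type*} [MeasurableSpace X]
    (μ : Measure (X × ℝ)) [IsProbabilityMeasure μ]
    (H : Set (X → ℝ)) (f₁ f₂ f : ℝ → ℝ)
    (hf : f = f₁ ∨ f = f₂)
    (C c : ℝ) (hc : 0 < c) (hCc : c ≤ C)
    (lbar : ℝ → ℝ → ℝ)
    (hlbar : ∀ a b, lbar a b = f₁ a + b * f₂ a)
    (hsandwich : ∀ a ∈ Set.Icc (0:ℝ) 1, ∀ b ∈ Set.Icc (0:ℝ) 1,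
      c / 2 * (f a - f b) ^ 2 ≤ lbar a b - lbar b b ∧
      lbar a b - lbar b b ≤ C / 2 * (f a - f b) ^ 2)
    (L : (X → ℝ) → ℝ)
    (hstar hhat : X → ℝ)
    (hrange : ∀ g ∈ H, ∀ x, g x ∈ Set.Icc (0:ℝ) 1)
    (hstar_range : ∀ x, hstar x ∈ Set.Icc (0:ℝ) 1)
    (hBayes : ∀ g : X → ℝ, L g = ∫ x, lbar (g x) (hstar x) ∂(μ.map Prod.fst))
    (hhatH : hhat ∈ H)
    (hmom : ∀ g ∈ H, MemLp (fun x => f (g x)) 2 (μ.map Prod.fst))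
    (hmom_star : MemLp (fun x => f (hstar x)) 2 (μ.map Prod.fst))
    (γ : (X → ℝ) → (X → ℝ) → ℝ)
    (hγ : ∀ g₁ g₂ : X → ℝ,
      γ g₁ g₂ = ∫ x, (f (g₁ x) - f (g₂ x)) ^ 2 ∂(μ.map Prod.fst)) :
    ∀ g ∈ H, γ g hhat ≤ 4 / c * (L g - L hhat) + 2 * (C / c + 1) * γ hhat hstar := by
  intro g hg
  simp only [hlbar] at hsandwich hBayes
  have hs : Sandwich f₁ f₂ f c C := hsandwich
  have hregret := hs.regret_lower_bound hc hCc hf (hrange g hg) (hrange hhat hhatH) hstar_range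
    (hmom g hg) (hmom hhat hhatH) hmom_star
  have htri := integral_sq_sub_le (hmom g hg) (hmom hhat hhatH) hmom_star
  rw [← hBayes, ← hBayes] at hregret
  rw [hγ, hγ]
  set A := ∫ x, (f (g x) - f (hstar x)) ^ 2 ∂(μ.map Prod.fst)
  set B := ∫ x, (f (hhat x) - f (hstar x)) ^ 2 ∂(μ.map Prod.fst)
  have hscaled : 2 * A - 2 * (C / c) * B ≤ 4 / c * (L g - L hhat) := by
    rw [show 2 * A - 2 * (C / c) * B = 4 / c * (c / 2 * A - C / 2 * B) by field_simp; ring]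
    gcongr
  linarith

/-- Variance-regret transfer under the quadratic sandwich condition. -/
theorem variance_regret_transfer
    {X : Type*} [MeasurableSpace X]
    (μ : Measure (X × ℝ)) [IsProbabilityMeasure μ]
    (H : Set (X → ℝ)) (f₁ f₂ f : ℝ → ℝ)
    (hf : f = f₁ ∨ f = f₂)
    (C c : ℝ) (hc : 0 < c) (hCc : c ≤ C)
    (lbar : ℝ → ℝ → ℝ)
    (hlbar : ∀ a b, lbar a b = f₁ a + b * f₂ a)
    (hsandwich : ∀ a ∈ Set.Icc (0:ℝ) 1, ∀ b ∈ Set.Icc (0:ℝ) 1,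
      c / 2 * (f a - f b) ^ 2 ≤ lbar a b - lbar b b ∧
      lbar a b - lbar b b ≤ C / 2 * (f a - f b) ^ 2)
    (L : (X → ℝ) → ℝ)
    (hL : ∀ g : X → ℝ, L g = ∫ z, f₁ (g z.1) + z.2 * f₂ (g z.1) ∂μ)
    (hstar hhat : X → ℝ)
    (hrange : ∀ g ∈ H, ∀ x, g x ∈ Set.Icc (0:ℝ) 1)
    (hstar_range : ∀ x, hstar x ∈ Set.Icc (0:ℝ) 1)
    (hBayes : ∀ g : X → ℝ, L g = ∫ x, lbar (g x) (hstar x) ∂(μ.map Prod.fst))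
    (hhatH : hhat ∈ H)
    (hhat_opt : ∀ g ∈ H, L hhat ≤ L g)
    (hmom : ∀ g ∈ H, MemLp (fun x => f (g x)) 2 (μ.map Prod.fst))
    (hmom_star : MemLp (fun x => f (hstar x)) 2 (μ.map Prod.fst))
    (γ : (X → ℝ) → (X → ℝ) → ℝ)
    (hγ : ∀ g₁ g₂ : X → ℝ,
      γ g₁ g₂ = ∫ x, (f (g₁ x) - f (g₂ x)) ^ 2 ∂(μ.map Prod.fst)) :
    ∀ g ∈ H, γ g hhat ≤ 4 / c * (L g - L hhat) + 2 * (C / c + 1) * γ hhat hstar :=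
  variance_regret_transfer_general μ H f₁ f₂ f hf C c hc hCc lbar hlbar hsandwich L hstar hhat
    hrange hstar_range hBayes hhatH hmom hmom_star γ hγ
end
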